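/- arXiv:2307.08442 — 5 statements merged into one kernel-verified Lean document; each statement's English description precedes it below -/
import Mathlib

section
/- Let G = (V, E, w) be a finite directed graph with edge weights in {−1, 0, +1}. Construct the graph G₁ as follows: start from the vertex set V; for every vertex u that has at least one outgoing edge of weight 0, add a new vertex u′ and an edge (u, u′) of weight +1; then, for every edge (u, v) ∈ E of weight 0, remove it and add the edge (u′, v) of weight −1; all edges of G of weight +1 or −1 are kept unchanged. Then for every pair of vertices u, v ∈ V, there exists a Dyck path from u to v in G if and only if there exists a Dyck path from u to v in G₁. -/
/-- `IsWalk E u k`: the sequence `u 0, u 1, …, u k` is a walk in the directed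
graph with edge relation `E`. -/
def IsWalk {V : Type*} (E : V → V → Prop) (u : ℕ → V) (k : ℕ) : Prop :=
  ∀ i < k, E (u i) (u (i + 1))

/-- The total weight of the walk `u 0, …, u k`. -/
def walkWeight {V : Type*} (w : V → V → ℤ) (u : ℕ → V) (k : ℕ) : ℤ :=
  ∑ i ∈ Finset.range k, w (u i) (u (i + 1))

/-- `NonnegPrefix w u k`: every prefix sum of the walk `u 0, …, u k` is nonnegative. -/
def NonnegPrefix {V : Type*} (w : V → V → ℤ) (u : ℕ → V) (k : ℕ) : Prop :=
  ∀ i ≤ k, 0 ≤ walkWeight w u i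

/-- A Dyck path from `s` to `t`: a nonnegative prefix path of total weight zero. -/
def DyckPath {V : Type*} (E : V → V → Prop) (w : V → V → ℤ) (s t : V) : Prop :=
  ∃ (u : ℕ → V) (k : ℕ), u 0 = s ∧ u k = t ∧ IsWalk E u k ∧ NonnegPrefix w u k ∧
    walkWeight w u k = 0

/-- The edge relation of the graph `G₁`: the vertex set is `V ⊕ V`, where `Sum.inl u`
is the original vertex `u` and `Sum.inr u` is the auxiliary vertex `u′` (which has
edges exactly when `u` has an outgoing edge of weight `0`).  Edges of weight `±1`
of `G` are kept, each zero-weight edge `(u, v)` is replaced by `(u, u′)` (weight `+1`)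
followed by `(u′, v)` (weight `-1`). -/
def E1 {V : Type*} (E : V → V → Prop) (w : V → V → ℤ) : V ⊕ V → V ⊕ V → Prop
  | Sum.inl u, Sum.inl v => E u v ∧ w u v ≠ 0
  | Sum.inl u, Sum.inr x => u = x ∧ ∃ v, E u v ∧ w u v = 0
  | Sum.inr x, Sum.inl v => E x v ∧ w x v = 0
  | Sum.inr _, Sum.inr _ => False

/-- The weight function of the graph `G₁`. -/
def w1 {V : Type*} (w : V → V → ℤ) : V ⊕ V → V ⊕ V → ℤ
  | Sum.inl u, Sum.inl v => w u v
  | Sum.inl _, Sum.inr _ => 1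
  | Sum.inr _, Sum.inl _ => -1
  | Sum.inr _, Sum.inr _ => 0

/-!
A walk of `G₁` between original vertices can enter an auxiliary vertex `x′` only by the
`+1` edge from `x` and must leave it by a `-1` edge `x′ → v` coming from a zero edge
`x → v` of `G`. So walks of `G₁` between original vertices are exactly walks of `G` with each
zero edge subdivided; the subdivision inserts one extra prefix sum, one above its
neighbours, so nonnegativity of the prefix sums and the total weight are unchanged.
-/

open Sum

section Walks

variable {V : Type*} {E : V → V → Prop} {w : V → V → ℤ}

inductive NonnegReach (E : V → V → Prop) (w : V → V → ℤ) (s : V) : V → ℤ → Prop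
  | refl : NonnegReach E w s s 0
  | tail {a b : V} {n : ℤ} :
      NonnegReach E w s a n → E a b → 0 ≤ n + w a b → NonnegReach E w s b (n + w a b)

lemma walkWeight_zero (u : ℕ → V) : walkWeight w u 0 = 0 := rfl

lemma walkWeight_succ (u : ℕ → V) (k : ℕ) :
    walkWeight w u (k + 1) = walkWeight w u k + w (u k) (u (k + 1)) :=
  Finset.sum_range_succ _ _

lemma walkWeight_congr {u v : ℕ → V} {k : ℕ} (h : ∀ i ≤ k, u i = v i) :
    walkWeight w u k = walkWeight w v k :=
  Finset.sum_congr rfl fun i hi => by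
    rw [Finset.mem_range] at hi
    rw [h i hi.le, h (i + 1) hi]

lemma nonnegReach_of_walk {s : V} {u : ℕ → V} {k : ℕ} (h0 : u 0 = s) (hW : IsWalk E u k)
    (hP : NonnegPrefix w u k) : NonnegReach E w s (u k) (walkWeight w u k) := by
  induction k with
  | zero => exact h0 ▸ NonnegReach.refl
  | succ k ih =>
    have hP' := hP (k + 1) le_rfl
    rw [walkWeight_succ] at hP' ⊢
    have ih' := ih (fun i hi => hW i (by omega)) fun i hi => hP i (by omega)
    exact ih'.tail (hW k k.lt_succ_self) hP'

lemma NonnegReach.exists_walk {s t : V} {n : ℤ} (h : NonnegReach E w s t n) :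
    ∃ (u : ℕ → V) (k : ℕ), u 0 = s ∧ u k = t ∧ IsWalk E u k ∧ NonnegPrefix w u k ∧
      walkWeight w u k = n := by
  induction h with
  | refl =>
    refine ⟨fun _ => s, 0, rfl, rfl, fun i hi => absurd hi i.not_lt_zero, fun i hi => ?_, rfl⟩
    rw [Nat.le_zero.mp hi, walkWeight_zero]
  | @tail a b n _ hab hnonneg ih =>
    obtain ⟨u, k, h0, hk, hW, hP, hwt⟩ := ih
    set u' := Function.update u (k + 1) b
    have hu' : ∀ i ≤ k, u' i = u i := fun i hi => Function.update_of_ne (by omega) _ _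
    have hlast : u' (k + 1) = b := Function.update_self ..
    have hwt' : walkWeight w u' (k + 1) = n + w a b := by
      rw [walkWeight_succ, walkWeight_congr hu', hu' k le_rfl, hlast, hk, hwt]
    refine ⟨u', k + 1, (hu' 0 k.zero_le).trans h0, hlast, ?_, ?_, hwt'⟩
    · intro i hi
      rcases Nat.lt_or_eq_of_le (Nat.le_of_lt_succ hi) with hi | rfl
      · rw [hu' i hi.le, hu' (i + 1) hi]
        exact hW i hi
      · rwa [hu' i le_rfl, hlast, hk]
    · intro i hi
      rcases Nat.lt_or_eq_of_le hi with hi | rfl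
      · rw [walkWeight_congr fun j hj => hu' j (by omega)]
        exact hP i (by omega)
      · rwa [hwt']

lemma dyckPath_iff_nonnegReach {s t : V} : DyckPath E w s t ↔ NonnegReach E w s t 0 :=
  ⟨fun ⟨_, _, h0, hk, hW, hP, hwt⟩ => hk ▸ hwt ▸ nonnegReach_of_walk h0 hW hP,
    NonnegReach.exists_walk⟩

end Walks

section Subdivision

variable {V : Type*} {E : V → V → Prop} {w : V → V → ℤ}

lemma NonnegReach.to_E1 {s t : V} {n : ℤ} (h : NonnegReach E w s t n) :
    NonnegReach (E1 E w) (w1 w) (inl s) (inl t) n := by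
  induction h with
  | refl => exact .refl
  | @tail a b n _ hab hnonneg ih =>
    by_cases hzero : w a b = 0
    · have hup : NonnegReach (E1 E w) (w1 w) (inl s) (inr a) (n + 1) :=
        ih.tail (b := inr a) ⟨rfl, b, hab, hzero⟩ (by simp only [w1]; omega)
      have hdown := hup.tail (b := inl b) ⟨hab, hzero⟩ (by simp only [w1]; omega)
      simpa only [w1, hzero, add_neg_cancel_right, add_zero] using hdown
    · exact ih.tail (b := inl b) ⟨hab, hzero⟩ hnonneg

lemma NonnegReach.of_E1 {s : V} {y : V ⊕ V} {n : ℤ}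
    (h : NonnegReach (E1 E w) (w1 w) (inl s) y n) :
    (∀ t, y = inl t → NonnegReach E w s t n) ∧
      (∀ a, y = inr a → NonnegReach E w s a (n - 1)) := by
  induction h with
  | refl => exact ⟨fun t ht => inl_injective ht ▸ .refl, fun a ha => absurd ha inl_ne_inr⟩
  | @tail x z n _ hxz hnonneg ih =>
    obtain ⟨ihl, ihr⟩ := ih
    rcases x with a | a <;> rcases z with b | b
    · refine ⟨fun t ht => inl_injective ht ▸ ?_, fun _ h => absurd h inl_ne_inr⟩
      exact (ihl a rfl).tail hxz.1 hnonneg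
    · obtain ⟨rfl, -⟩ := hxz
      refine ⟨fun _ h => absurd h inr_ne_inl, fun t ht => inr_injective ht ▸ ?_⟩
      simpa only [w1, add_sub_cancel_right] using ihl a rfl
    · obtain ⟨hab, hzero⟩ := hxz
      refine ⟨fun t ht => inl_injective ht ▸ ?_, fun _ h => absurd h inl_ne_inr⟩
      have := (ihr a rfl).tail hab (by simp only [w1] at hnonneg; omega)
      simpa only [w1, hzero, add_zero, sub_eq_add_neg] using this
    · exact hxz.elim

end Subdivision

theorem dyck_iff_dyck_in_G1_general {V : Type*}
    (E : V → V → Prop) (w : V → V → ℤ) :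
    ∀ u v : V, DyckPath E w u v ↔ DyckPath (E1 E w) (w1 w) (Sum.inl u) (Sum.inl v) := by
  intro u v
  rw [dyckPath_iff_nonnegReach, dyckPath_iff_nonnegReach]
  exact ⟨NonnegReach.to_E1, fun h => h.of_E1.1 v rfl⟩

/-- For a finite graph `G` with weights in `{-1, 0, +1}` and the
graph `G₁` obtained by splitting every zero-weight edge into a `+1` edge and a `-1`
edge through an auxiliary vertex, Dyck reachability between original vertices is the
same in `G` and `G₁`. -/
theorem dyck_iff_dyck_in_G1 {V : Type*} [Fintype V]
    (E : V → V → Prop) (w : V → V → ℤ)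
    (hw : ∀ a b, E a b → w a b = -1 ∨ w a b = 0 ∨ w a b = 1) :
    ∀ u v : V, DyckPath E w u v ↔ DyckPath (E1 E w) (w1 w) (Sum.inl u) (Sum.inl v) :=
  dyck_iff_dyck_in_G1_general E w
end

section
/- Let G = (V, E, w) be a finite directed graph with integer edge weights and no self-loops. Define the graph G₁ with vertex set {v^i : v ∈ V, i ∈ {1, 2, 3, 4, 5}} and with the following edges: an edge (u^i, v^{i+1}) of weight −w(u, v) for every edge (u, v) ∈ E and every i ∈ {1, 2, 3}; and an edge (v^4, v^5) of weight −1 for every v ∈ V. Then there exist vertices a, b, c ∈ V with (a, b), (b, c), (c, a) ∈ E and w(a, b) + w(b, c) + w(c, a) < 0 if and only if there exists a vertex v ∈ V such that there is a nonnegative prefix path from v^1 to v^5 in G₁. -/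
/-- There is a nonnegative prefix path from `s` to `t`. -/
def NNPPath {V : Type*} (E : V → V → Prop) (w : V → V → ℤ) (s t : V) : Prop :=
  ∃ (u : ℕ → V) (k : ℕ), u 0 = s ∧ u k = t ∧ IsWalk E u k ∧ NonnegPrefix w u k

/-- The edge relation of the layered graph `G₁`: the vertex `v^i` is encoded as the
pair `(v, i)` (with the layers `i ∈ {1,2,3,4,5}`; all other pairs are isolated).
There is an edge `(u^i, v^{i+1})` for every `(u,v) ∈ E` and `i ∈ {1,2,3}`, and an
edge `(v^4, v^5)` for every `v`. -/
def Elay {V : Type*} (E : V → V → Prop) : V × ℕ → V × ℕ → Prop := fun p q =>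
  (E p.1 q.1 ∧ 1 ≤ p.2 ∧ p.2 ≤ 3 ∧ q.2 = p.2 + 1) ∨
  (p.1 = q.1 ∧ p.2 = 4 ∧ q.2 = 5)

/-- The weight function of `G₁`: the edge `(u^i, v^{i+1})` for `i ∈ {1,2,3}` has
weight `-w u v`, and the edge `(v^4, v^5)` has weight `-1`. -/
def wlay {V : Type*} (w : V → V → ℤ) : V × ℕ → V × ℕ → ℤ := fun p q =>
  if p.2 = 4 then -1 else -(w p.1 q.1)

lemma nnp_of_triangle {V : Type*} (E : V → V → Prop) (w : V → V → ℤ) {a b c : V}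
    (hab : E a b) (hbc : E b c) (hca : E c a)
    (h1 : w a b ≤ 0) (h2 : w a b + w b c ≤ 0) (h3 : w a b + w b c + w c a < 0) :
    NNPPath (Elay E) (wlay w) (a, 1) (a, 5) := by
  refine ⟨fun n => if n = 0 then (a,1) else if n = 1 then (b,2) else
    if n = 2 then (c,3) else if n = 3 then (a,4) else (a,5), 4, rfl, rfl, ?_, ?_⟩
  · intro i hi
    interval_cases i <;> simp [Elay, hab, hbc, hca]
  · intro i hi
    interval_cases i <;>
      simp [walkWeight, Finset.sum_range_succ, wlay] <;> omega

/-- In a finite graph without self-loops, there is a negative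
triangle iff in the layered graph `G₁` some vertex `v` admits a nonnegative prefix
path from `v^1` to `v^5`. -/
theorem negative_triangle_iff_nnp_in_layered {V : Type*} [Fintype V]
    (E : V → V → Prop) (w : V → V → ℤ)
    (hloop : ∀ v : V, ¬ E v v) :
    (∃ a b c : V, E a b ∧ E b c ∧ E c a ∧ w a b + w b c + w c a < 0) ↔
      ∃ v : V, NNPPath (Elay E) (wlay w) (v, 1) (v, 5) := by
  constructor
  · rintro ⟨a, b, c, hab, hbc, hca, hsum⟩
    by_cases h1 : w a b ≤ 0
    · by_cases h2 : w a b + w b c ≤ 0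
      · exact ⟨a, nnp_of_triangle E w hab hbc hca h1 h2 hsum⟩
      · exact ⟨c, nnp_of_triangle E w hca hab hbc (by omega) (by omega) (by omega)⟩
    · by_cases h2 : w b c ≤ 0
      · exact ⟨b, nnp_of_triangle E w hbc hca hab h2 (by omega) (by omega)⟩
      · exact ⟨c, nnp_of_triangle E w hca hab hbc (by omega) (by omega) (by omega)⟩
  · rintro ⟨v, u, k, h0, hk, hw, hp⟩
    have hlayer : ∀ i ≤ k, (u i).2 = 1 + i := by
      intro i hi
      induction i with
      | zero => rw [h0]
      | succ n ih =>
        have hn := ih (Nat.le_of_succ_le hi)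
        rcases hw n (by omega) with ⟨_, _, _, hq⟩ | ⟨_, hp4, hq5⟩ <;> omega
    have hk4 : k = 4 := by
      have := hlayer k le_rfl
      rw [hk] at this
      omega
    subst hk4
    have l0 : (u 0).2 = 1 := by rw [h0]
    have l1 : (u 1).2 = 2 := hlayer 1 (by omega)
    have l2 : (u 2).2 = 3 := hlayer 2 (by omega)
    have l3 : (u 3).2 = 4 := hlayer 3 (by omega)
    have e0 : E v (u 1).1 := by
      rcases hw 0 (by omega) with ⟨h, _⟩ | ⟨_, h4, _⟩
      · rw [h0] at h; exact h
      · omega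
    have e1 : E (u 1).1 (u 2).1 := by
      rcases hw 1 (by omega) with ⟨h, _⟩ | ⟨_, h4, _⟩
      · exact h
      · omega
    have e2 : E (u 2).1 (u 3).1 := by
      rcases hw 2 (by omega) with ⟨h, _⟩ | ⟨_, h4, _⟩
      · exact h
      · omega
    have e3 : (u 3).1 = v := by
      rcases hw 3 (by omega) with ⟨_, _, h3, _⟩ | ⟨h, _, _⟩
      · omega
      · rw [h, hk]
    rw [e3] at e2
    have htot := hp 4 le_rfl
    rw [walkWeight] at htot
    rw [show (4:ℕ) = 3 + 1 from rfl, Finset.sum_range_succ, Finset.sum_range_succ,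
      Finset.sum_range_succ, Finset.sum_range_succ, Finset.sum_range_zero] at htot
    simp only [wlay, l0, l1, l2, l3, h0] at htot
    norm_num at htot
    rw [e3] at htot
    refine ⟨v, (u 1).1, (u 2).1, e0, e1, e2, ?_⟩
    omega
end

section
/- Let G = (V, E, w) be a finite directed graph with integer edge weights, and let Z be the set of vertices v for which there exists an infinite walk from v with all prefix sums ≥ 0. Then every finite walk u_0 u_1 ⋯ u_k with k ≥ 1, u_k ∈ Z, and u_0, …, u_{k−1} ∉ Z has strictly negative total weight. -/
/-- `ZSet E w` is the set of vertices `v` from which there is an infinite walk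
with all prefix sums nonnegative. -/
def ZSet {V : Type*} (E : V → V → Prop) (w : V → V → ℤ) : Set V :=
  {v | ∃ u : ℕ → V, u 0 = v ∧ (∀ i, E (u i) (u (i + 1))) ∧ ∀ i, 0 ≤ walkWeight w u i}

/-- Every finite walk of length `≥ 1` that ends in `Z` and whose
other vertices all lie outside `Z` has strictly negative total weight. -/
theorem walk_into_Z_neg_weight {V : Type*} [Fintype V]
    (E : V → V → Prop) (w : V → V → ℤ)
    (u : ℕ → V) (k : ℕ) (hk : 1 ≤ k)
    (hwalk : IsWalk E u k)
    (hend : u k ∈ ZSet E w)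
    (hout : ∀ i < k, u i ∉ ZSet E w) :
    walkWeight w u k < 0 := by
  by_contra hcon
  push_neg at hcon
  -- choose i < k minimizing the prefix sum
  obtain ⟨i, hik, hmin⟩ : ∃ i < k, ∀ j < k, walkWeight w u i ≤ walkWeight w u j := by
    obtain ⟨i, hi, hm⟩ := Finset.exists_min_image (Finset.range k)
      (fun j => walkWeight w u j) ⟨0, Finset.mem_range.mpr hk⟩
    exact ⟨i, Finset.mem_range.mp hi, fun j hj => hm j (Finset.mem_range.mpr hj)⟩
  obtain ⟨v, hv0, hvE, hvS⟩ := hend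
  set d := k - i with hd
  have hdpos : 0 < d := Nat.sub_pos_of_lt hik
  have hid : i + d = k := Nat.add_sub_cancel' (le_of_lt hik)
  have hSi : walkWeight w u i ≤ 0 := by
    have := hmin 0 hk
    simpa [walkWeight] using this
  set u' : ℕ → V := fun n => if n < d then u (i + n) else v (n - d) with hu'
  have h1 : ∀ n < d, u' n = u (i + n) := fun n hn => by simp [hu', hn]
  have h2 : ∀ n, d ≤ n → u' n = v (n - d) := fun n hn => by
    simp [hu', Nat.not_lt.mpr hn]
  have h3 : u' d = u k := by
    rw [h2 d le_rfl]; simp [hv0]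
  -- edges
  have hE' : ∀ n, E (u' n) (u' (n + 1)) := by
    intro n
    rcases lt_trichotomy (n + 1) d with h | h | h
    · rw [h1 n (Nat.lt_of_succ_lt h), h1 (n + 1) h]
      have : i + n < k := by omega
      exact (by simpa [Nat.add_assoc] using hwalk (i + n) this)
    · rw [h1 n (by omega), h, h3]
      have : i + n < k := by omega
      have hk1 : i + n + 1 = k := by omega
      simpa [hk1] using hwalk (i + n) this
    · have hn : d ≤ n := by omega
      rw [h2 n hn, h2 (n + 1) (by omega)]
      have : n + 1 - d = (n - d) + 1 := by omega
      rw [this]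
      exact hvE (n - d)
  -- prefix sums in first phase
  have hsum1 : ∀ m ≤ d, walkWeight w u i + walkWeight w u' m = walkWeight w u (i + m) := by
    intro m hm
    induction m with
    | zero => simp [walkWeight]
    | succ m ih =>
      have hm' : m ≤ d := by omega
      have hmd : m < d := by omega
      have hterm : w (u' m) (u' (m + 1)) = w (u (i + m)) (u (i + m + 1)) := by
        rcases lt_or_eq_of_le (Nat.succ_le_of_lt hmd) with h | h
        · rw [h1 m hmd, h1 (m + 1) h]
          ring_nf
        · have hd' : m + 1 = d := h
          rw [h1 m hmd, hd', h3]
          have : i + m + 1 = k := by omega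
          rw [this]
      have e1 : walkWeight w u' (m + 1) = walkWeight w u' m + w (u' m) (u' (m + 1)) := by
        simp [walkWeight, Finset.sum_range_succ]
      have e2 : walkWeight w u (i + (m + 1)) = walkWeight w u (i + m) + w (u (i + m)) (u (i + m + 1)) := by
        have : i + (m + 1) = (i + m) + 1 := by ring
        rw [this]
        simp [walkWeight, Finset.sum_range_succ]
      rw [e1, e2, ← ih hm', hterm]
      ring
  -- prefix sums in second phase
  have hsum2 : ∀ m, walkWeight w u' (d + m) = walkWeight w u' d + walkWeight w v m := by
    intro m
    induction m with
    | zero => simp [walkWeight]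
    | succ m ih =>
      have e1 : walkWeight w u' (d + (m + 1)) = walkWeight w u' (d + m) + w (u' (d + m)) (u' (d + m + 1)) := by
        have : d + (m + 1) = (d + m) + 1 := by ring
        rw [this]
        simp [walkWeight, Finset.sum_range_succ]
      have e2 : walkWeight w v (m + 1) = walkWeight w v m + w (v m) (v (m + 1)) := by
        simp [walkWeight, Finset.sum_range_succ]
      have hva : u' (d + m) = v m := by
        rw [h2 (d + m) (by omega)]; congr 1; omega
      have hvb : u' (d + m + 1) = v (m + 1) := by
        rw [h2 (d + m + 1) (by omega)]; congr 1; omega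
      rw [e1, e2, ih, hva, hvb]
      ring
  have hnonneg1 : ∀ m ≤ d, 0 ≤ walkWeight w u' m := by
    intro m hm
    have h := hsum1 m hm
    have : walkWeight w u i ≤ walkWeight w u (i + m) := by
      rcases lt_or_eq_of_le (show i + m ≤ k by omega) with h' | h'
      · exact hmin (i + m) h'
      · rw [h']; exact le_trans hSi hcon
    omega
  exact hout i hik ⟨u', by simp [h1 0 hdpos], hE', by
    intro n
    rcases le_or_gt n d with hn | hn
    · exact hnonneg1 n hn
    · have : n = d + (n - d) := by omega
      rw [this, hsum2]
      have := hnonneg1 d le_rfl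
      have := hvS (n - d)
      omega⟩
end

section
/- Let G = (V, E, w) be a finite directed graph with integer edge weights, and let Z be the set of vertices v for which there exists an infinite walk from v with all prefix sums ≥ 0. Then every closed walk of length ≥ 1 all of whose vertices lie outside Z has strictly negative total weight. -/
/-- Every closed walk of length `≥ 1` all of whose vertices lie
outside `Z` has strictly negative total weight. -/
theorem closed_walk_outside_Z_neg_weight {V : Type*} [Fintype V]
    (E : V → V → Prop) (w : V → V → ℤ)
    (c : ℕ → V) (k : ℕ) (hk : 1 ≤ k)
    (hwalk : IsWalk E c k)
    (hclosed : c k = c 0)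
    (hout : ∀ i ≤ k, c i ∉ ZSet E w) :
    walkWeight w c k < 0 := by
  by_contra hW
  push_neg at hW
  have hk0 : 0 < k := hk
  set W := walkWeight w c k with hWdef
  set d : ℕ → V := fun j => c (j % k) with hd
  have hstep : ∀ (u : ℕ → V) (n : ℕ),
      walkWeight w u (n + 1) = walkWeight w u n + w (u n) (u (n + 1)) := by
    intro u n; exact Finset.sum_range_succ _ _
  have hmodmod : ∀ n : ℕ, (n + 1) % k = (n % k + 1) % k := by
    intro n; rw [Nat.mod_add_mod]
  have hsucc1 : ∀ n : ℕ, n % k + 1 < k → (n + 1) % k = n % k + 1 := by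
    intro n h; rw [hmodmod n, Nat.mod_eq_of_lt h]
  have hsucc2 : ∀ n : ℕ, n % k + 1 = k → (n + 1) % k = 0 := by
    intro n h; rw [hmodmod n, h, Nat.mod_self]
  have hdiv1 : ∀ n : ℕ, n % k + 1 < k → (n + 1) / k = n / k := by
    intro n h
    have hnd : ¬ k ∣ (n + 1) := by
      intro hd
      have h0 : (n + 1) % k = 0 := Nat.mod_eq_zero_of_dvd hd
      rw [hsucc1 n h] at h0; omega
    rw [Nat.succ_div, if_neg hnd]; omega
  have hdiv2 : ∀ n : ℕ, n % k + 1 = k → (n + 1) / k = n / k + 1 := by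
    intro n h
    have hd : k ∣ (n + 1) := Nat.dvd_of_mod_eq_zero (hsucc2 n h)
    rw [Nat.succ_div, if_pos hd]
  have hedge : ∀ j, E (d j) (d (j + 1)) := by
    intro j
    have hm : j % k < k := Nat.mod_lt _ hk0
    by_cases h : j % k + 1 < k
    · have h2 : (j + 1) % k = j % k + 1 := hsucc1 j h
      simp only [hd, h2]
      exact hwalk _ hm
    · have hkeq : j % k + 1 = k := by omega
      have h2 : (j + 1) % k = 0 := hsucc2 j hkeq
      simp only [hd, h2]
      have := hwalk (j % k) hm
      rwa [hkeq, hclosed] at this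
  have hSd : ∀ n, walkWeight w d n = ((n / k : ℕ) : ℤ) * W + walkWeight w c (n % k) := by
    intro n
    induction n with
    | zero => simp [walkWeight]
    | succ n ih =>
      rw [hstep d n, ih]
      by_cases h : n % k + 1 < k
      · have h2 : (n + 1) % k = n % k + 1 := hsucc1 n h
        have h3 : (n + 1) / k = n / k := hdiv1 n h
        rw [h2, h3, hstep c (n % k)]
        have hdn : d n = c (n % k) := rfl
        have hdn1 : d (n + 1) = c ((n + 1) % k) := rfl
        rw [hdn, hdn1, h2]; ring
      · have hkeq : n % k + 1 = k := by
          have := Nat.mod_lt n hk0; omega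
        have h2 : (n + 1) % k = 0 := hsucc2 n hkeq
        have h3 : (n + 1) / k = n / k + 1 := hdiv2 n hkeq
        have hWsplit : W = walkWeight w c (n % k) + w (c (n % k)) (c k) := by
          rw [hWdef, ← hkeq, hstep c (n % k), hkeq]
        have hdn : d n = c (n % k) := rfl
        have hdn1 : d (n + 1) = c 0 := by simp only [hd, h2]
        have hW0 : walkWeight w c 0 = 0 := by simp [walkWeight]
        rw [h2, h3, hdn, hdn1, ← hclosed, hW0]
        push_cast
        linear_combination (-1) * hWsplit
  -- choose the argmin of prefix sums over [0, k)
  obtain ⟨i0, hi0mem, hi0min⟩ := Finset.exists_min_image (Finset.range k)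
    (fun i => walkWeight w c i) ⟨0, Finset.mem_range.mpr hk0⟩
  have hi0k : i0 < k := Finset.mem_range.mp hi0mem
  have hS0 : walkWeight w c 0 = 0 := by simp [walkWeight]
  have hi0le : ∀ m < k, walkWeight w c i0 ≤ walkWeight w c m := by
    intro m hm; exact hi0min m (Finset.mem_range.mpr hm)
  have hSdlb : ∀ m, walkWeight w c i0 ≤ walkWeight w d m := by
    intro m
    rw [hSd m]
    have h1 : walkWeight w c i0 ≤ walkWeight w c (m % k) := hi0le _ (Nat.mod_lt _ hk0)
    have h2 : (0 : ℤ) ≤ ((m / k : ℕ) : ℤ) * W := mul_nonneg (by positivity) hW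
    linarith
  have hSdi0 : walkWeight w d i0 = walkWeight w c i0 := by
    rw [hSd i0, Nat.div_eq_of_lt hi0k, Nat.mod_eq_of_lt hi0k]
    push_cast
    ring
  -- the infinite walk from c i0
  set u : ℕ → V := fun j => d (i0 + j) with hu
  have hushift : ∀ n, walkWeight w u n = walkWeight w d (i0 + n) - walkWeight w d i0 := by
    intro n
    induction n with
    | zero => simp [walkWeight]
    | succ n ih =>
      rw [hstep u n, ih, show i0 + (n + 1) = (i0 + n) + 1 by ring, hstep d (i0 + n)]
      have h1 : u n = d (i0 + n) := rfl
      have h2 : u (n + 1) = d (i0 + n + 1) := by simp only [hu]; ring_nf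
      rw [h1, h2]; ring
  apply hout i0 (le_of_lt hi0k)
  refine ⟨u, ?_, ?_, ?_⟩
  · simp only [hu, hd, Nat.add_zero, Nat.mod_eq_of_lt hi0k]
  · intro i
    have : i0 + i + 1 = i0 + (i + 1) := by ring
    simpa [hu, this] using hedge (i0 + i)
  · intro i
    rw [hushift i, hSdi0]
    linarith [hSdlb (i0 + i)]
end

section
/- Let G = (V, E, w) be a finite directed graph with integer edge weights, let Z be the set of vertices v for which there exists an infinite walk from v with all prefix sums ≥ 0, and for v ∈ V let e*(v) denote the least integer E ≥ 0 such that there exists an infinite walk u_0 = v, u_1, u_2, … with E + Σ_{j<i} w(u_j, u_{j+1}) ≥ 0 for all i ≥ 1 (e*(v) = ∞ if no such E exists). Let v ∉ Z and suppose there exists a finite walk from v whose last vertex lies in Z and all of whose other vertices lie outside Z. Then e*(v) is finite, it is a strictly positive integer, and e*(v) = min_P (−w(P)), where P ranges over all finite walks from v whose last vertex lies in Z and all of whose other vertices lie outside Z (this minimum exists). -/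
def Suff {V : Type*} (E : V → V → Prop) (w : V → V → ℤ) (v : V) (En : ℤ) : Prop :=
  ∃ u : ℕ → V, u 0 = v ∧ (∀ i, E (u i) (u (i + 1))) ∧ ∀ i, 0 ≤ En + walkWeight w u i

lemma walkWeight_add {V : Type*} (w : V → V → ℤ) (u : ℕ → V) (i m : ℕ) :
    walkWeight w u (i + m) = walkWeight w u i + walkWeight w (fun n => u (i + n)) m := by
  unfold walkWeight
  rw [Finset.sum_range_add]; rfl

lemma suff_concat {V : Type*} (E : V → V → Prop) (w : V → V → ℤ) (u : ℕ → V) (k : ℕ) (En : ℤ)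
    (hw : IsWalk E u k) (hZ : u k ∈ ZSet E w)
    (hpre : ∀ i ≤ k, 0 ≤ En + walkWeight w u i) :
    Suff E w (u 0) En := by
  obtain ⟨c, hc0, hce, hcp⟩ := hZ
  set g : ℕ → V := fun n => if n < k then u n else c (n - k) with hg
  have hgk : ∀ j ≤ k, g j = u j := by
    intro j hj
    by_cases h : j < k
    · simp [g, h]
    · have hjk : j = k := by omega
      simp [g, hjk, hc0]
  have hgs : ∀ j, g (k + j) = c j := by
    intro j
    have h : ¬ (k + j < k) := by omega
    simp [g, h]
  have hW1 : ∀ i ≤ k, walkWeight w g i = walkWeight w u i := by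
    intro i hi
    unfold walkWeight
    refine Finset.sum_congr rfl fun j hj => ?_
    rw [Finset.mem_range] at hj
    rw [hgk j (by omega), hgk (j + 1) (by omega)]
  have hge' : ∀ n, E (g n) (g (n + 1)) := by
    intro n
    by_cases h : n < k
    · rw [hgk n (by omega), hgk (n + 1) (by omega)]
      exact hw n h
    · have h1 : g n = c (n - k) := by simp [g, h]
      have h2 : g (n + 1) = c (n - k + 1) := by
        have e : n + 1 - k = n - k + 1 := by omega
        simp [g, show ¬ (n + 1 < k) by omega, e]
      rw [h1, h2]
      exact hce (n - k)
  have hgp : ∀ i, 0 ≤ En + walkWeight w g i := by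
    intro i
    by_cases h : i ≤ k
    · rw [hW1 i h]; exact hpre i h
    · obtain ⟨j, rfl⟩ : ∃ j, i = k + j := ⟨i - k, by omega⟩
      rw [walkWeight_add, hW1 k le_rfl]
      have hcc : walkWeight w (fun n => g (k + n)) j = walkWeight w c j := by
        unfold walkWeight
        refine Finset.sum_congr rfl fun x _ => ?_
        have e1 := hgs x
        have e2 := hgs (x + 1)
        simp only [e1, e2]
      rw [hcc]
      have h1 := hpre k le_rfl
      have h2 := hcp j
      linarith
  exact ⟨g, by rw [hgk 0 (Nat.zero_le k)], hge', hgp⟩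

lemma walk_to_Z_neg {V : Type*} (E : V → V → Prop) (w : V → V → ℤ) :
    ∀ k : ℕ, ∀ u : ℕ → V, IsWalk E u k → u k ∈ ZSet E w →
      (∀ i < k, u i ∉ ZSet E w) → u 0 ∉ ZSet E w → walkWeight w u k < 0 := by
  intro k
  induction k using Nat.strong_induction_on with
  | _ k ih =>
    intro u hw hZ hout h0
    by_contra hge
    push_neg at hge
    by_cases hall : ∀ i ≤ k, 0 ≤ walkWeight w u i
    · apply h0
      obtain ⟨g, hg0, hge', hgp⟩ := suff_concat E w u k 0 hw hZ
        (fun i hi => by simpa using hall i hi)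
      exact ⟨g, hg0, hge', fun i => by simpa using hgp i⟩
    · push_neg at hall
      obtain ⟨i, hik, hi⟩ := hall
      have hi0 : 0 < i := by
        rcases Nat.eq_zero_or_pos i with rfl | h
        · simp [walkWeight] at hi
        · exact h
      have hikk : i < k := by
        rcases eq_or_lt_of_le hik with rfl | h
        · exact absurd hge (by linarith)
        · exact h
      have hWW : walkWeight w u i + walkWeight w (fun n => u (i + n)) (k - i) =
          walkWeight w u k := by
        rw [← walkWeight_add]
        congr 1
        omega
      have hsh := ih (k - i) (by omega) (fun n => u (i + n))
        (fun j hj => hw (i + j) (by omega))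
        (by
          have e : i + (k - i) = k := by omega
          simpa [e] using hZ)
        (fun j hj => hout (i + j) (by omega))
        (by simpa using hout i hikk)
      linarith

lemma hitZ {V : Type*} (E : V → V → Prop) (w : V → V → ℤ) (u : ℕ → V) (En : ℤ)
    (he : ∀ i, E (u i) (u (i + 1))) (hp : ∀ i, 0 ≤ En + walkWeight w u i) :
    ∃ i, u i ∈ ZSet E w := by
  obtain ⟨s, ⟨i, hi⟩, hleast⟩ := Int.exists_least_of_bdd
    (P := fun s => ∃ i, walkWeight w u i = s)
    ⟨-En, fun z ⟨j, hj⟩ => by have := hp j; linarith⟩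
    ⟨walkWeight w u 0, 0, rfl⟩
  refine ⟨i, fun n => u (i + n), rfl, fun n => he (i + n), fun n => ?_⟩
  have h1 := walkWeight_add w u i n
  have h2 := hleast (walkWeight w u (i + n)) ⟨i + n, rfl⟩
  linarith

/-- Let `v ∉ Z` admit a finite walk whose last vertex lies in `Z`
and all of whose other vertices lie outside `Z`.  Then the minimum sufficient
energy `e*(v)` is a finite, strictly positive integer `m`; namely `m` is the least
`E ≥ 0` that is sufficient at `v`, and `m` is the minimum of `-w(P)` over all
finite walks `P` from `v` ending in `Z` with all other vertices outside `Z`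
(in particular this minimum exists). -/
theorem energy_eq_min_neg_weight_to_Z {V : Type*} [Fintype V]
    (E : V → V → Prop) (w : V → V → ℤ) (v : V)
    (hv : v ∉ ZSet E w)
    (hreach : ∃ (u : ℕ → V) (k : ℕ), u 0 = v ∧ IsWalk E u k ∧ u k ∈ ZSet E w ∧
      ∀ i < k, u i ∉ ZSet E w) :
    ∃ m : ℤ, 0 < m ∧
      IsLeast {En : ℤ | 0 ≤ En ∧ Suff E w v En} m ∧
      IsLeast {x : ℤ | ∃ (u : ℕ → V) (k : ℕ), u 0 = v ∧ IsWalk E u k ∧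
        u k ∈ ZSet E w ∧ (∀ i < k, u i ∉ ZSet E w) ∧ x = -(walkWeight w u k)} m := by
  classical
  obtain ⟨u₀, k₀, hu₀0, hu₀w, hu₀Z, hu₀out⟩ := hreach
  have hS_pos : ∀ x : ℤ, (∃ (u : ℕ → V) (k : ℕ), u 0 = v ∧ IsWalk E u k ∧
      u k ∈ ZSet E w ∧ (∀ i < k, u i ∉ ZSet E w) ∧ x = -(walkWeight w u k)) → 0 < x := by
    rintro x ⟨u, k, h0, hw, hZ, hout, rfl⟩
    have := walk_to_Z_neg E w k u hw hZ hout (h0 ▸ hv)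
    linarith
  obtain ⟨m, hmS, hmlb⟩ := Int.exists_least_of_bdd
    (P := fun x => ∃ (u : ℕ → V) (k : ℕ), u 0 = v ∧ IsWalk E u k ∧
      u k ∈ ZSet E w ∧ (∀ i < k, u i ∉ ZSet E w) ∧ x = -(walkWeight w u k))
    ⟨1, fun z hz => by have := hS_pos z hz; omega⟩
    ⟨-(walkWeight w u₀ k₀), u₀, k₀, hu₀0, hu₀w, hu₀Z, hu₀out, rfl⟩
  have hm_pos : 0 < m := hS_pos m hmS
  refine ⟨m, hm_pos, ⟨⟨hm_pos.le, ?_⟩, ?_⟩, hmS, hmlb⟩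
  · -- Suff E w v m
    obtain ⟨u, k, h0, hw, hZ, hout, hmeq⟩ := hmS
    have hpre : ∀ i ≤ k, 0 ≤ m + walkWeight w u i := by
      intro i hi
      rcases eq_or_lt_of_le hi with rfl | hik
      · rw [hmeq]; ring_nf; exact le_refl 0
      · by_contra hneg
        push_neg at hneg
        have hWW : walkWeight w u i + walkWeight w (fun n => u (i + n)) (k - i) =
            walkWeight w u k := by
          rw [← walkWeight_add]; congr 1; omega
        have hsh := walk_to_Z_neg E w (k - i) (fun n => u (i + n))
          (fun j hj => hw (i + j) (by omega))
          (by
            have e : i + (k - i) = k := by omega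
            simpa [e] using hZ)
          (fun j hj => hout (i + j) (by omega))
          (by simpa using hout i hik)
        rw [hmeq] at hneg
        linarith
    rw [← h0]
    exact suff_concat E w u k m hw hZ hpre
  · -- lower bound
    rintro En ⟨hEn0, u, h0, he, hp⟩
    obtain ⟨i, hiZ⟩ := hitZ E w u En he hp
    have hex : ∃ i, u i ∈ ZSet E w := ⟨i, hiZ⟩
    set k := Nat.find hex with hk
    have hkZ : u k ∈ ZSet E w := Nat.find_spec hex
    have hkout : ∀ j < k, u j ∉ ZSet E w := fun j hj => Nat.find_min hex hj
    have hmem : m ≤ -(walkWeight w u k) :=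
      hmlb _ ⟨u, k, h0, fun j _ => he j, hkZ, hkout, rfl⟩
    have := hp k
    linarith
end
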